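/- arXiv:2003.01850 — 3 statements merged into one kernel-verified Lean document; each statement's English description precedes it below -/
import Mathlib

section
/- Let (Ω, 𝓕, P) be a probability space, q ≥ 1, and let X : Ω → ℝ^q be a measurable random vector. Suppose that for every sign pattern ε : {1, …, q} → {+1, −1}, the event {ω : ε_j · X_j(ω) > 0 for every j = 1, …, q} has positive P-probability. Then for every nonzero a ∈ ℝ^q, both P({ω : ⟨a, X(ω)⟩ > 0}) > 0 and P({ω : ⟨a, X(ω)⟩ < 0}) > 0; in particular P({ω : ⟨a, X(ω)⟩ ≠ 0}) > 0. -/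
open MeasureTheory

/-- If every sign-pattern event `{ω : ε_j · X_j(ω) > 0 ∀ j}` has positive
probability, then for every nonzero `a`, both `⟨a, X⟩ > 0` and `⟨a, X⟩ < 0` have positive
probability; in particular `⟨a, X⟩ ≠ 0` has positive probability. -/
theorem stmt_3 {Ω : Type*} [MeasurableSpace Ω] (P : Measure Ω) [IsProbabilityMeasure P]
    (q : ℕ) (hq : 1 ≤ q) (X : Ω → Fin q → ℝ) (hX : Measurable X)
    (hsign : ∀ ε : Fin q → ℝ, (∀ j, ε j = 1 ∨ ε j = -1) →
      0 < P {ω | ∀ j, 0 < ε j * X ω j}) :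
    ∀ a : Fin q → ℝ, a ≠ 0 →
      0 < P {ω | 0 < ∑ j, a j * X ω j} ∧
      0 < P {ω | ∑ j, a j * X ω j < 0} ∧
      0 < P {ω | ∑ j, a j * X ω j ≠ 0} := by
  intro a ha
  obtain ⟨j0, hj0⟩ : ∃ j, a j ≠ 0 := by
    by_contra h
    push_neg at h
    exact ha (funext h)
  have key : ∀ s : ℝ, s = 1 ∨ s = -1 →
      {ω | ∀ j, 0 < (if 0 ≤ a j then s else -s) * X ω j} ⊆
        {ω | 0 < s * ∑ j, a j * X ω j} := by
    intro s hs ω hω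
    have hsum : 0 < ∑ j, s * (a j * X ω j) := by
      refine Finset.sum_pos' ?_ ⟨j0, Finset.mem_univ j0, ?_⟩
      · intro j _
        have hj := hω j
        by_cases h : 0 ≤ a j
        · simp only [if_pos h] at hj
          calc (0:ℝ) = a j * 0 := by ring
            _ ≤ a j * (s * X ω j) := by
                apply mul_le_mul_of_nonneg_left (le_of_lt hj) h
            _ = s * (a j * X ω j) := by ring
        · push_neg at h
          simp only [if_neg (not_le.mpr h)] at hj
          have : 0 < (-a j) * ((-s) * X ω j) :=
            mul_pos (by linarith) hj
          nlinarith
      · have hj := hω j0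
        by_cases h : 0 ≤ a j0
        · simp only [if_pos h] at hj
          have h' : 0 < a j0 := lt_of_le_of_ne h (Ne.symm hj0)
          have := mul_pos h' hj
          nlinarith
        · push_neg at h
          simp only [if_neg (not_le.mpr h)] at hj
          have : 0 < (-a j0) * ((-s) * X ω j0) := mul_pos (by linarith) hj
          nlinarith
    calc (0:ℝ) < ∑ j, s * (a j * X ω j) := hsum
      _ = s * ∑ j, a j * X ω j := by rw [Finset.mul_sum]
  have hpos : 0 < P {ω | 0 < ∑ j, a j * X ω j} := by
    have h1 := hsign (fun j => if 0 ≤ a j then (1:ℝ) else -1)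
      (fun j => by by_cases h : 0 ≤ a j <;> simp [h])
    refine lt_of_lt_of_le h1 (measure_mono ?_)
    intro ω hω
    have := key 1 (Or.inl rfl) (by simpa using hω)
    simpa using this
  have hneg : 0 < P {ω | ∑ j, a j * X ω j < 0} := by
    have h1 := hsign (fun j => if 0 ≤ a j then (-1:ℝ) else 1)
      (fun j => by by_cases h : 0 ≤ a j <;> simp [h])
    refine lt_of_lt_of_le h1 (measure_mono ?_)
    intro ω hω
    have := key (-1) (Or.inr rfl) (by simpa using hω)
    simp only [Set.mem_setOf_eq] at this ⊢
    linarith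
  refine ⟨hpos, hneg, lt_of_lt_of_le hpos (measure_mono ?_)⟩
  intro ω hω
  exact ne_of_gt hω
end

section
/- Let (Ω, 𝓕, P) be a probability space, q ≥ 1, let X : Ω → ℝ^q be a measurable random vector, and let C ⊆ ℝ^q be a convex set such that for every γ ∈ C: 1 + ⟨γ, X(ω)⟩ > 0 for P-almost every ω, and ω ↦ log(1 + ⟨γ, X(ω)⟩) is P-integrable. Assume additionally that for every nonzero d ∈ ℝ^q, P({ω : ⟨d, X(ω)⟩ ≠ 0}) > 0. Then the function F(γ) = ∫ log(1 + ⟨γ, X(ω)⟩) dP(ω) is strictly concave on C. -/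
open MeasureTheory

/-- Under the additional nondegeneracy condition `P(⟨d, X⟩ ≠ 0) > 0` for all
nonzero `d`, the population dual objective `F γ = ∫ log(1 + ⟨γ, X⟩) dP` is strictly concave
on `C`. -/
theorem stmt_6 {Ω : Type*} [MeasurableSpace Ω] (P : Measure Ω) [IsProbabilityMeasure P]
    (q : ℕ) (hq : 1 ≤ q) (X : Ω → Fin q → ℝ) (hX : Measurable X)
    (C : Set (Fin q → ℝ)) (hC : Convex ℝ C)
    (hpos : ∀ γ ∈ C, ∀ᵐ ω ∂P, 0 < 1 + ∑ j, γ j * X ω j)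
    (hint : ∀ γ ∈ C, Integrable (fun ω => Real.log (1 + ∑ j, γ j * X ω j)) P)
    (hne : ∀ d : Fin q → ℝ, d ≠ 0 → 0 < P {ω | ∑ j, d j * X ω j ≠ 0}) :
    StrictConcaveOn ℝ C (fun γ => ∫ ω, Real.log (1 + ∑ j, γ j * X ω j) ∂P) := by
  refine ⟨hC, fun γ hγ δ hδ hγδ a b ha hb hab => ?_⟩
  set u : Ω → ℝ := fun ω => 1 + ∑ j, γ j * X ω j with hu
  set v : Ω → ℝ := fun ω => 1 + ∑ j, δ j * X ω j with hv
  have hmem : a • γ + b • δ ∈ C := hC hγ hδ ha.le hb.le hab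
  have hsum : ∀ ω, 1 + ∑ j, (a • γ + b • δ) j * X ω j = a * u ω + b * v ω := by
    intro ω
    have h1 : ∑ j, (a • γ + b • δ) j * X ω j
        = a * ∑ j, γ j * X ω j + b * ∑ j, δ j * X ω j := by
      simp [Pi.add_apply, Pi.smul_apply, smul_eq_mul, add_mul,
        Finset.sum_add_distrib, Finset.mul_sum, mul_assoc]
    rw [h1]
    simp only [hu, hv]
    have : a + b = 1 := hab
    ring_nf
    nlinarith [this]
  have hIu : Integrable (fun ω => Real.log (u ω)) P := hint γ hγ
  have hIv : Integrable (fun ω => Real.log (v ω)) P := hint δ hδ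
  have hIc : Integrable (fun ω => Real.log (a * u ω + b * v ω)) P := by
    have h := hint _ hmem
    simpa only [hsum] using h
  set f : Ω → ℝ := fun ω =>
    Real.log (a * u ω + b * v ω) - (a * Real.log (u ω) + b * Real.log (v ω)) with hf
  have hIf : Integrable f P := hIc.sub ((hIu.const_mul a).add (hIv.const_mul b))
  have hposu : ∀ᵐ ω ∂P, 0 < u ω := hpos γ hγ
  have hposv : ∀ᵐ ω ∂P, 0 < v ω := hpos δ hδ
  have hf_nonneg : 0 ≤ᵐ[P] f := by
    filter_upwards [hposu, hposv] with ω h1 h2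
    have hcc := (strictConcaveOn_log_Ioi.concaveOn).2 (Set.mem_Ioi.2 h1)
      (Set.mem_Ioi.2 h2) ha.le hb.le hab
    simp only [smul_eq_mul] at hcc
    simp only [hf, Pi.zero_apply]
    linarith
  have hset : {ω | ∑ j, (γ - δ) j * X ω j ≠ 0} = {ω | u ω ≠ v ω} := by
    ext ω
    have h2 : ∑ j, (γ - δ) j * X ω j = u ω - v ω := by
      simp [hu, hv, Pi.sub_apply, sub_mul, Finset.sum_sub_distrib]
    constructor
    · intro h3 h4
      exact h3 (by rw [h2, h4, sub_self])
    · intro h3 h4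
      exact h3 (by have := h2 ▸ h4; linarith [sub_eq_zero.1 this])
  have hP : 0 < P {ω | u ω ≠ v ω} := by
    rw [← hset]; exact hne (γ - δ) (sub_ne_zero.2 hγδ)
  have hle : P {ω | u ω ≠ v ω} ≤ P (Function.support f) := by
    apply measure_mono_ae
    filter_upwards [hposu, hposv] with ω h1 h2 hne'
    have hstrict := strictConcaveOn_log_Ioi.2 (Set.mem_Ioi.2 h1)
      (Set.mem_Ioi.2 h2) hne' ha hb hab
    simp only [smul_eq_mul] at hstrict
    have : 0 < f ω := by simp only [hf]; linarith
    exact Function.mem_support.2 (ne_of_gt this)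
  have hPsupp : 0 < P (Function.support f) := lt_of_lt_of_le hP hle
  have hintpos : 0 < ∫ ω, f ω ∂P :=
    (integral_pos_iff_support_of_nonneg_ae hf_nonneg hIf).2 hPsupp
  have hsplit : ∫ ω, f ω ∂P
      = (∫ ω, Real.log (a * u ω + b * v ω) ∂P)
        - (a * ∫ ω, Real.log (u ω) ∂P + b * ∫ ω, Real.log (v ω) ∂P) := by
    have hIsum : Integrable (fun ω => a * Real.log (u ω) + b * Real.log (v ω)) P :=
      (hIu.const_mul a).add (hIv.const_mul b)
    simp only [hf]
    rw [integral_sub hIc hIsum,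
      integral_add (hIu.const_mul a) (hIv.const_mul b),
      MeasureTheory.integral_const_mul, MeasureTheory.integral_const_mul]
  rw [hsplit] at hintpos
  simp only [hsum, smul_eq_mul]
  linarith
end

section
/- Let (Ω, 𝓕, P) be a probability space, let C ≥ 0, and let λ : ℝ × Ω → ℝ be jointly measurable with 0 ≤ λ(u, ω) ≤ C for all u and ω, and such that for P-almost every ω, the function u ↦ λ(u, ω) is continuous. Define S(t, ω) = exp(−∫₀ᵗ λ(u, ω) du). Fix t ∈ ℝ and real numbers λ₀ > 0 and ℓ > 0, and let G : ℝ → ℝ satisfy G(t) > 0 and G differentiable at t with G′(t) = −ℓ·G(t). Assume ∫_Ω λ(t, ω)·S(t, ω) dP(ω) > 0. Then the function t ↦ ∫_Ω S(t, ω) dP(ω) is differentiable at t with derivative equal to G′(t) if and only if λ₀/ℓ = G(t) / ∫_Ω (λ(t, ω)/λ₀)·S(t, ω) dP(ω). -/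
open MeasureTheory intervalIntegral

/-! The survival function `S(·, ω)` is differentiable with derivative `-λ S`, and on a
neighbourhood of `t` the hazard `λ ≤ C` and `S ≤ exp (C (|t| + 1))` give an integrable dominating
constant, so differentiation under the integral sign yields
`∂ₜ ∫ S(t, ω) dP = -∫ λ(t, ω) S(t, ω) dP`. By uniqueness of derivatives the left-hand side
of the equivalence says `∫ λ S dP = ℓ G(t)`, and the right-hand side is the same equation
after clearing the denominators `ℓ`, `λ₀` and `∫ λ S dP`. -/

theorem measurable_intervalIntegral_of_measurable_uncurry {Ω : Type*} [MeasurableSpace Ω]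
    {f : ℝ → Ω → ℝ} (hf : Measurable (Function.uncurry f)) (a b : ℝ) :
    Measurable fun ω => ∫ u in a..b, f u ω := by
  have hIoc : ∀ a b : ℝ, Measurable fun ω => ∫ u in Set.Ioc a b, f u ω := fun a b =>
    (hf.stronglyMeasurable.integral_prod_left (μ := volume.restrict (Set.Ioc a b))).measurable
  exact (hIoc a b).sub (hIoc b a)

theorem exp_neg_integral_le {f : ℝ → ℝ} {C : ℝ} (hf : ∀ u, |f u| ≤ C) (x : ℝ) :
    Real.exp (-∫ u in (0 : ℝ)..x, f u) ≤ Real.exp (C * |x|) := by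
  refine Real.exp_le_exp.2 ((neg_le_abs _).trans ?_)
  simpa using norm_integral_le_of_norm_le_const (a := 0) (b := x) (f := f) fun u _ => hf u

theorem hasDerivAt_exp_neg_integral {f : ℝ → ℝ} (hf : Continuous f) (a x : ℝ) :
    HasDerivAt (fun y => Real.exp (-∫ u in a..y, f u))
      (-(f x * Real.exp (-∫ u in a..x, f u))) x := by
  simpa [mul_comm] using (hf.integral_hasStrictDerivAt a x).hasDerivAt.neg.exp

theorem hasDerivAt_integral_exp_neg_integral {Ω : Type*} [MeasurableSpace Ω] {P : Measure Ω}
    [IsFiniteMeasure P] {lam : ℝ → Ω → ℝ} {C : ℝ} (hmeas : Measurable (Function.uncurry lam))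
    (hbd : ∀ u ω, |lam u ω| ≤ C) (hcont : ∀ᵐ ω ∂P, Continuous fun u => lam u ω) (t : ℝ) :
    HasDerivAt (fun t' => ∫ ω, Real.exp (-∫ u in (0 : ℝ)..t', lam u ω) ∂P)
      (-∫ ω, lam t ω * Real.exp (-∫ u in (0 : ℝ)..t, lam u ω) ∂P) t := by
  set B := Real.exp (C * (|t| + 1))
  have hS_meas : ∀ x, Measurable fun ω => Real.exp (-∫ u in (0 : ℝ)..x, lam u ω) := fun x =>
    (measurable_intervalIntegral_of_measurable_uncurry hmeas 0 x).neg.exp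
  have hlam_meas : ∀ x, Measurable fun ω => lam x ω := fun x => hmeas.comp measurable_prodMk_left
  have hS_le : ∀ x ∈ Metric.ball t 1, ∀ ω, Real.exp (-∫ u in (0 : ℝ)..x, lam u ω) ≤ B := by
    intro x hx ω
    have hx : |x| ≤ |t| + 1 := by
      have := abs_sub_abs_le_abs_sub x t
      rw [Metric.mem_ball, Real.dist_eq] at hx
      linarith
    have hC : 0 ≤ C := (abs_nonneg _).trans (hbd 0 ω)
    exact (exp_neg_integral_le (hbd · ω) x).trans
      (Real.exp_le_exp.2 (mul_le_mul_of_nonneg_left hx hC))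
  have hderiv := hasDerivAt_integral_of_dominated_loc_of_deriv_le (μ := P) (x₀ := t)
    (F' := fun x ω => -(lam x ω * Real.exp (-∫ u in (0 : ℝ)..x, lam u ω)))
    (bound := fun _ => C * B) (Metric.ball_mem_nhds t one_pos)
    (.of_forall fun x => (hS_meas x).aestronglyMeasurable)
    ((integrable_const B).mono' (hS_meas t).aestronglyMeasurable <| .of_forall fun ω => by
      rw [Real.norm_eq_abs, abs_of_pos (Real.exp_pos _)]
      exact hS_le t (Metric.mem_ball_self one_pos) ω)
    ((hlam_meas t).mul (hS_meas t)).neg.aestronglyMeasurable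
    (.of_forall fun ω x hx => by
      rw [norm_neg, norm_mul, Real.norm_eq_abs, Real.norm_eq_abs, abs_of_pos (Real.exp_pos _)]
      exact mul_le_mul (hbd x ω) (hS_le x hx ω) (Real.exp_pos _).le
        ((abs_nonneg _).trans (hbd x ω)))
    (integrable_const _)
    (hcont.mono fun ω hω x _ => hasDerivAt_exp_neg_integral hω 0 x)
  simpa only [MeasureTheory.integral_neg] using hderiv.2

theorem div_eq_div_div_iff_eq_mul {a l g I : ℝ} (ha : a ≠ 0) (hl : l ≠ 0) (hI : I ≠ 0) :
    a / l = g / (I / a) ↔ I = l * g := by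
  rw [div_div_eq_mul_div, div_eq_div_iff hl hI]
  constructor
  · intro h
    exact mul_left_cancel₀ ha (by linear_combination h)
  · intro h
    rw [h]
    ring

theorem stmt_16_general {Ω : Type*} [MeasurableSpace Ω] (P : Measure Ω) [IsProbabilityMeasure P]
    (C : ℝ) (lam : ℝ → Ω → ℝ)
    (hmeas : Measurable (Function.uncurry lam))
    (hbd : ∀ u ω, 0 ≤ lam u ω ∧ lam u ω ≤ C)
    (hcont : ∀ᵐ ω ∂P, Continuous fun u => lam u ω)
    (S : ℝ → Ω → ℝ) (hS : ∀ t ω, S t ω = Real.exp (-∫ u in (0 : ℝ)..t, lam u ω))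
    (t lam0 ell : ℝ) (hlam0 : 0 < lam0) (hell : 0 < ell)
    (G : ℝ → ℝ)
    (hnum : 0 < ∫ ω, lam t ω * S t ω ∂P) :
    HasDerivAt (fun t' => ∫ ω, S t' ω ∂P) (-(ell * G t)) t ↔
      lam0 / ell = G t / ∫ ω, (lam t ω / lam0) * S t ω ∂P := by
  obtain rfl : S = fun t ω => Real.exp (-∫ u in (0 : ℝ)..t, lam u ω) := funext₂ hS
  beta_reduce at hnum ⊢
  have habs : ∀ u ω, |lam u ω| ≤ C := fun u ω =>
    abs_le.2 ⟨by linarith [(hbd u ω).1, (hbd u ω).2], (hbd u ω).2⟩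
  have hderiv := hasDerivAt_integral_exp_neg_integral hmeas habs hcont t
  set I := ∫ ω, lam t ω * Real.exp (-∫ u in (0 : ℝ)..t, lam u ω) ∂P
  have hratio : ∫ ω, lam t ω / lam0 * Real.exp (-∫ u in (0 : ℝ)..t, lam u ω) ∂P = I / lam0 := by
    simp only [div_mul_eq_mul_div, MeasureTheory.integral_div, I]
  rw [hratio, div_eq_div_div_iff_eq_mul hlam0.ne' hell.ne' hnum.ne']
  constructor
  · intro h
    linarith [h.unique hderiv]
  · intro h
    rwa [h] at hderiv

/-- With bounded hazards `λ(u, ω)` a.e. continuous in `u` and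
`S(t, ω) = exp(−∫₀ᵗ λ(u, ω) du)`, fix `t`, a baseline hazard `λ₀ > 0`, an overall hazard
`ℓ > 0`, and an overall survival `G` with `G(t) > 0` and `G′(t) = −ℓ·G(t)`. If
`∫ λ(t, ω) S(t, ω) dP(ω) > 0`, then `t ↦ ∫ S(t, ω) dP(ω)` has derivative `G′(t)` at `t`
iff `λ₀/ℓ = G(t)/∫ (λ(t, ω)/λ₀)·S(t, ω) dP(ω)` (i.e. `λ₀/λ = 1 − AR(t)`). -/
theorem stmt_16 {Ω : Type*} [MeasurableSpace Ω] (P : Measure Ω) [IsProbabilityMeasure P]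
    (C : ℝ) (hC : 0 ≤ C) (lam : ℝ → Ω → ℝ)
    (hmeas : Measurable (Function.uncurry lam))
    (hbd : ∀ u ω, 0 ≤ lam u ω ∧ lam u ω ≤ C)
    (hcont : ∀ᵐ ω ∂P, Continuous fun u => lam u ω)
    (S : ℝ → Ω → ℝ) (hS : ∀ t ω, S t ω = Real.exp (-∫ u in (0 : ℝ)..t, lam u ω))
    (t lam0 ell : ℝ) (hlam0 : 0 < lam0) (hell : 0 < ell)
    (G : ℝ → ℝ) (hGt : 0 < G t) (hG : HasDerivAt G (-(ell * G t)) t)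
    (hnum : 0 < ∫ ω, lam t ω * S t ω ∂P) :
    HasDerivAt (fun t' => ∫ ω, S t' ω ∂P) (-(ell * G t)) t ↔
      lam0 / ell = G t / ∫ ω, (lam t ω / lam0) * S t ω ∂P :=
  stmt_16_general P C lam hmeas hbd hcont S hS t lam0 ell hlam0 hell G hnum
end
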